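/- Let H be a separable real Hilbert space with orthonormal basis (φ_i)_{i≥1}, let (λ_i)_{i≥1} be positive reals with Σ_i λ_i < ∞, and let A be the positive self-adjoint operator with Aφ_i = λ_i^{−1}φ_i and domain D(A) = {f ∈ H : Σ_i λ_i^{−2}⟨f,φ_i⟩² < ∞}. Let M be a bounded self-adjoint operator on H with ⟨Mf, f⟩ ≥ c‖f‖² for all f ∈ H, for some c > 0. Let C be a bounded positive self-adjoint operator with range contained in D(A) such that (A + M)Cf = f for all f ∈ H. Then: (a) ⟨f, Cf⟩ ≤ ⟨f, A^{−1}f⟩ = Σ_i λ_i⟨f,φ_i⟩² for all f ∈ H; (b) ‖Cf‖ ≤ c^{−1}‖f‖ for all f ∈ H; (c) for every N ∈ ℕ, Σ_{i≥1} ⟨φ_i, Cφ_i⟩ ≤ N/c + Σ_{i>N} λ_i. -/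

import Mathlib

open MeasureTheory ProbabilityTheory Real Set Filter
open scoped ENNReal NNReal Topology RealInnerProductSpace

noncomputable section

/-- `W` is a standard Brownian motion under `P`: starts at `0`, has a.s. continuous sample paths,
Gaussian increments of the right variance, and independent increments. -/
def IsBrownianMotion {Ω : Type*} [MeasurableSpace Ω] (P : Measure Ω)
    (W : ℝ → Ω → ℝ) : Prop :=
  (∀ᵐ ω ∂P, W 0 ω = 0 ∧ Continuous fun t => W t ω) ∧
  (∀ s t : ℝ, 0 ≤ s → s ≤ t →
    P.map (fun ω => W t ω - W s ω) = gaussianReal 0 (Real.toNNReal (t - s))) ∧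
  (∀ (n : ℕ) (u : ℕ → ℝ), Monotone u → 0 ≤ u 0 →
    iIndepFun
      (fun i : Fin n => fun ω => W (u (i + 1)) ω - W (u i) ω) P)

/-- `X` is a weak solution of `dX_t = b(X_t) dt + dW_t`, `X_0 = 0`:
`X` is continuous, starts at zero, and `X_t - ∫_0^t b(X_s) ds` is a standard Brownian motion. -/
def IsWeakSolution {Ω : Type*} [MeasurableSpace Ω] (P : Measure Ω)
    (b : ℝ → ℝ) (X : ℝ → Ω → ℝ) : Prop :=
  (∀ᵐ ω ∂P, X 0 ω = 0 ∧ Continuous fun t => X t ω) ∧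
  IsBrownianMotion P (fun t ω => X t ω - ∫ s in (0:ℝ)..t, b (X s ω))

/-- `L` is the periodic local time of the path `X` at time `T`: the continuous `1`-periodic
nonnegative function satisfying the periodic occupation times formula. -/
def IsPeriodicLocalTimeAt (X : ℝ → ℝ) (T : ℝ) (L : ℝ → ℝ) : Prop :=
  Continuous L ∧ Function.Periodic L 1 ∧ (∀ x, 0 ≤ L x) ∧
  ∀ f : ℝ → ℝ, Measurable f → Function.Periodic f 1 → (∃ C, ∀ x, |f x| ≤ C) →
    ∫ u in (0:ℝ)..T, f (X u) = ∫ x in (0:ℝ)..1, f x * L x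

/-- The normalized speed density `ρ` of the diffusion with drift `b`. -/
def speedDensity (b : ℝ → ℝ) (x : ℝ) : ℝ :=
  (∫ y in (0:ℝ)..1, Real.exp (2 * ∫ z in (0:ℝ)..y, b z))⁻¹ *
    Real.exp (2 * ∫ y in (0:ℝ)..x, b y)

/-- `Y T = O_P(a T)` as `T → ∞`: the family `Y T / a T` is stochastically bounded. -/
def BigOP {Ω : Type*} [MeasurableSpace Ω] (P : Measure Ω)
    (Y : ℝ → Ω → ℝ) (a : ℝ → ℝ) : Prop :=
  ∀ ε : ℝ, 0 < ε → ∃ M : ℝ, ∃ T₀ : ℝ, ∀ T : ℝ, T₀ ≤ T →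
    (P {ω | M * a T < |Y T ω|}).toReal < ε

/-- The `k`-th Fourier coefficient of (the 1-periodic extension of) `f : ℝ → ℝ`. -/
def fourierCoefOn (f : ℝ → ℝ) (k : ℤ) : ℂ :=
  ∫ x in (0:ℝ)..1, (f x : ℂ) * Complex.exp (-2 * Real.pi * Complex.I * k * x)

/-- Squared Sobolev `H^α` norm of `f` on the circle, via Fourier coefficients. -/
def sobolevNormSq (α : ℝ) (f : ℝ → ℝ) : ℝ :=
  ∑' k : ℤ, ((1:ℝ) + |(k:ℝ)|) ^ (2 * α) * ‖fourierCoefOn f k‖ ^ 2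

/-- Sobolev `H^α` norm of `f` on the circle. -/
def sobolevNorm (α : ℝ) (f : ℝ → ℝ) : ℝ := Real.sqrt (sobolevNormSq α f)

/-- Membership in the Sobolev space `H^α(𝕋)`. -/
def MemSobolev (α : ℝ) (f : ℝ → ℝ) : Prop :=
  Summable fun k : ℤ => ((1:ℝ) + |(k:ℝ)|) ^ (2 * α) * ‖fourierCoefOn f k‖ ^ 2

/-- The weighted Fourier coefficient sequence representing `f` as an element of `H^α(𝕋)`. -/
def sobolevSeq (α : ℝ) (f : ℝ → ℝ) : ℤ → ℂ :=
  fun k => (((1:ℝ) + |(k:ℝ)|) ^ α : ℝ) * fourierCoefOn f k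

open Classical in
/-- `f`, viewed as an element of the sequence-space model of `H^α(𝕋)` (junk value `0`
if `f ∉ H^α`). -/
def toSobolev (α : ℝ) (f : ℝ → ℝ) : lp (fun _ : ℤ => ℂ) 2 :=
  if h : Memℓp (sobolevSeq α f) 2 then ⟨sobolevSeq α f, h⟩ else 0

/-- `g` is the weak derivative of `f` on the circle. -/
def HasPeriodicWeakDeriv (f g : ℝ → ℝ) : Prop :=
  ∀ φ : ℝ → ℝ, ContDiff ℝ (⊤ : ℕ∞) φ → Function.Periodic φ 1 →
    ∫ x in (0:ℝ)..1, f x * deriv φ x = - ∫ x in (0:ℝ)..1, g x * φ x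

/-- `D` is a chain of weak derivatives of length `p` of square-integrable periodic functions:
`D 0 ∈ H^p(𝕋)` with `j`-th weak derivative `D j`. -/
def IsSobolevChain (p : ℕ) (D : ℕ → ℝ → ℝ) : Prop :=
  (∀ j ≤ p, Measurable (D j) ∧
    IntervalIntegrable (fun x => (D j x) ^ 2) MeasureTheory.volume 0 1) ∧
  ∀ j < p, HasPeriodicWeakDeriv (D j) (D (j + 1))

/-- The indicator `χ_T(x)`: `1` if `X_0 < x < X_T`, `-1` if `X_T < x < X_0`, `0` otherwise. -/
def chiInd (x0 xT x : ℝ) : ℝ :=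
  if x0 < x ∧ x < xT then 1 else if xT < x ∧ x < x0 then -1 else 0

/-- The periodized indicator `χ°_T(x) = ∑_{k ∈ ℤ} χ_T(x + k)`. -/
def chiPer (x0 xT x : ℝ) : ℝ := ∑' k : ℤ, chiInd x0 xT (x + (k : ℝ))

/-- The negative log-likelihood `Φ_T(b)` written in terms of the periodic local time `L`
and the periodized indicator `χ`. -/
def PhiT (L χ : ℝ → ℝ) (b : ℝ → ℝ) : ℝ :=
  (1/2) * ∫ x in (0:ℝ)..1, (L x * (b x ^ 2 + deriv b x) - 2 * χ x * b x)

/-- `⌈k/2⌉` for a natural number `k`. -/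
def ceilHalf (k : ℕ) : ℕ := (k + 1) / 2

/-- The eigenvalues `λ_k = (η (4π²⌈k/2⌉²)^p + ηκ)⁻¹` of the prior covariance operator. -/
def priorEigen (p : ℕ) (η κ : ℝ) (k : ℕ) : ℝ :=
  (η * (4 * Real.pi ^ 2 * (ceilHalf k : ℝ) ^ 2) ^ p + η * κ)⁻¹

/-- The trigonometric basis: `φ_{2k}(x) = √2 cos(2πkx)`, `φ_{2k-1}(x) = √2 sin(2πkx)`. -/
def trigBasis (k : ℕ) (x : ℝ) : ℝ :=
  if k % 2 = 0 then Real.sqrt 2 * Real.cos (2 * Real.pi * (k / 2 : ℕ) * x)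
  else Real.sqrt 2 * Real.sin (2 * Real.pi * (ceilHalf k : ℝ) * x)

/-- The random series `V_x = ∑_{k ≥ 1} √λ_k φ_k(x) Z_k` defining the prior. -/
def priorSeries {Ω' : Type*} (p : ℕ) (η κ : ℝ) (Z : ℕ → Ω' → ℝ) (ω : Ω') (x : ℝ) : ℝ :=
  ∑' k : ℕ, Real.sqrt (priorEigen p η κ (k + 1)) * trigBasis (k + 1) x * Z (k + 1) ω

/-- `Z` is an i.i.d. sequence of standard Gaussian random variables under `P`. -/
def IsiidStdGaussian {Ω' : Type*} [MeasurableSpace Ω'] (P : Measure Ω') (Z : ℕ → Ω' → ℝ) : Prop :=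
  (∀ k, Measurable (Z k) ∧ P.map (Z k) = gaussianReal 0 1) ∧
  iIndepFun Z P

/-- The `L²(0,1)` distance between two functions. -/
def L2distOn (f g : ℝ → ℝ) : ℝ := Real.sqrt (∫ x in (0:ℝ)..1, (f x - g x) ^ 2)

/-- The posterior measure at inverse-likelihood data `(L, χ)`: the prior `Π` reweighted by
the likelihood `exp(-Φ_T)` and normalized. -/
def posteriorMeasure (prior : Measure (ℝ → ℝ)) (L χ : ℝ → ℝ) : Measure (ℝ → ℝ) :=
  (ENNReal.ofReal (∫ b, Real.exp (-PhiT L χ b) ∂prior))⁻¹ •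
    prior.withDensity fun b => ENNReal.ofReal (Real.exp (-PhiT L χ b))

/-- The (pointwise) mean of a measure on functions. -/
def measureMeanFun (μ : Measure (ℝ → ℝ)) (x : ℝ) : ℝ := ∫ f, f x ∂μ

end

noncomputable section

/-- `W` is a standard Brownian motion with respect to the filtration `F` under `P`. -/
def IsBrownianMotionFiltered {Ω : Type*} {mΩ : MeasurableSpace Ω} (P : Measure Ω)
    (F : MeasureTheory.Filtration ℝ mΩ) (W : ℝ → Ω → ℝ) : Prop :=
  (∀ᵐ ω ∂P, W 0 ω = 0 ∧ Continuous fun t => W t ω) ∧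
  (∀ t : ℝ, 0 ≤ t → Measurable[F t] (W t)) ∧
  (∀ s t : ℝ, 0 ≤ s → s ≤ t →
    P.map (fun ω => W t ω - W s ω) = gaussianReal 0 (Real.toNNReal (t - s)) ∧
    Indep (MeasurableSpace.comap (fun ω => W t ω - W s ω) Real.measurableSpace) (F s) P)

/-- The penalized least-squares objective functional `Λ`. -/
def lambdaFun (η κ : ℝ) (L χ : ℝ → ℝ) (w : ℝ → ℝ) : ℝ :=
  ∫ x in (0:ℝ)..1,
    ((1/2) * w x ^ 2 * (η * κ + L x) + (1/2) * deriv w x * L x - w x * χ x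
      + (1/2) * η * (deriv (deriv w) x) ^ 2)

/-- The scale function of the diffusion with drift `b`, normalized so that
`s 0 = 0` and `s 1 = 1`. -/
def scaleFun (b : ℝ → ℝ) (x : ℝ) : ℝ :=
  (∫ y in (0:ℝ)..1, Real.exp (-(2 * ∫ z in (0:ℝ)..y, b z)))⁻¹ *
    ∫ y in (0:ℝ)..x, Real.exp (-(2 * ∫ z in (0:ℝ)..y, b z))

/-- `u ∈ Ḣ^p(𝕋)` is a weak solution of the posterior mean equation
`η(-Δ)^p u + (ηκ + L)u = ½ L' + χ`. -/
def SolvesPosteriorMeanEq (p : ℕ) (η κ : ℝ) (L χ : ℝ → ℝ) (u : ℝ → ℝ) : Prop :=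
  ∃ Du : ℕ → ℝ → ℝ, Du 0 = u ∧ IsSobolevChain p Du ∧ (∫ x in (0:ℝ)..1, u x) = 0 ∧
    ∀ v : ℝ → ℝ, ∀ Dv : ℕ → ℝ → ℝ, Dv 0 = v → IsSobolevChain p Dv →
      (∫ x in (0:ℝ)..1, v x) = 0 →
      η * (∫ x in (0:ℝ)..1, Du p x * Dv p x) + η * κ * (∫ x in (0:ℝ)..1, u x * v x)
          + (∫ x in (0:ℝ)..1, u x * v x * L x)
        = -(1/2) * (∫ x in (0:ℝ)..1, Dv 1 x * L x) + ∫ x in (0:ℝ)..1, v x * χ x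

/-- `u ∈ Ḣ^p(𝕋)` is a weak solution of `η(-Δ)^p u + (ηκ + L)u = g - ∫₀¹ g`,
i.e. `u = C_T g` for the posterior covariance operator. -/
def SolvesCovarianceEq (p : ℕ) (η κ : ℝ) (L g : ℝ → ℝ) (u : ℝ → ℝ) : Prop :=
  ∃ Du : ℕ → ℝ → ℝ, Du 0 = u ∧ IsSobolevChain p Du ∧ (∫ x in (0:ℝ)..1, u x) = 0 ∧
    ∀ v : ℝ → ℝ, ∀ Dv : ℕ → ℝ → ℝ, Dv 0 = v → IsSobolevChain p Dv →
      (∫ x in (0:ℝ)..1, v x) = 0 →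
      η * (∫ x in (0:ℝ)..1, Du p x * Dv p x) + η * κ * (∫ x in (0:ℝ)..1, u x * v x)
          + (∫ x in (0:ℝ)..1, u x * v x * L x)
        = ∫ x in (0:ℝ)..1, (g x - ∫ t in (0:ℝ)..1, g t) * v x

end
private lemma amgm_aux {t l f c : ℝ} (ht : 0 < t) (hl : 0 < l) :
    f * c ≤ t / 2 * (l * f ^ 2) + 1 / (2 * t) * (l⁻¹ * c ^ 2) := by
  have h2 : 1 / (2 * t) * (l⁻¹ * c ^ 2) = c ^ 2 / (2 * t * l) := by
    field_simp
  have h3 : t / 2 * (l * f ^ 2) = t * l * f ^ 2 / 2 := by ring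
  rw [h2, h3, div_add_div _ _ (two_ne_zero) (by positivity), le_div_iff₀ (by positivity)]
  nlinarith [sq_nonneg (t * l * f - c), mul_pos ht hl]

private lemma opt_aux {S P : ℝ} (hS0 : 0 ≤ S) (hP0 : 0 ≤ P)
    (h : ∀ t : ℝ, 0 < t → S ≤ t / 2 * P + 1 / (2 * t) * S) : S ≤ P := by
  rcases eq_or_lt_of_le hS0 with hS | hS
  · linarith
  rcases eq_or_lt_of_le hP0 with hP | hP
  · have := h 1 one_pos
    rw [← hP] at this ⊢
    linarith
  · set u := Real.sqrt S with hu
    set v := Real.sqrt P with hv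
    have hu0 : 0 < u := Real.sqrt_pos.2 hS
    have hv0 : 0 < v := Real.sqrt_pos.2 hP
    have hu2 : u ^ 2 = S := Real.sq_sqrt hS0
    have hv2 : v ^ 2 = P := Real.sq_sqrt hP0
    have ht := h (u / v) (by positivity)
    have key : S ≤ u * v := by
      have e1 : u / v / 2 * P = u * v / 2 := by
        rw [← hv2]; field_simp
      have e2 : 1 / (2 * (u / v)) * S = u * v / 2 := by
        rw [← hu2]; field_simp
      rw [e1, e2] at ht; linarith
    nlinarith [key, hu2, hv2, sq_nonneg (u - v), mul_pos hu0 hv0]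

set_option maxHeartbeats 1000000 in
/-- Abstract operator bound behind the posterior trace estimate:
if `A` is the positive self-adjoint operator diagonalized by an orthonormal basis `φ` with
eigenvalues `(lam i)⁻¹`, `M` is bounded self-adjoint and coercive with constant `c`, and the
bounded positive self-adjoint operator `C` satisfies `(A + M)C = I`, then `⟨f, Cf⟩ ≤ ⟨f, A⁻¹f⟩`,
`‖Cf‖ ≤ c⁻¹‖f‖`, and `tr C ≤ N/c + ∑_{i ≥ N} lam i` for every `N`. -/
theorem covariance_operator_bounds
    {H : Type*} [NormedAddCommGroup H] [InnerProductSpace ℝ H] [CompleteSpace H]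
    (φ : ℕ → H) (hON : Orthonormal ℝ φ)
    (htot : (Submodule.span ℝ (Set.range φ)).topologicalClosure = ⊤)
    (lam : ℕ → ℝ) (hlam : ∀ i, 0 < lam i) (hsum : Summable lam)
    (M : H →L[ℝ] H) (hMsa : ∀ f g : H, ⟪M f, g⟫ = ⟪f, M g⟫)
    (c : ℝ) (hc : 0 < c) (hcoer : ∀ f : H, c * ‖f‖ ^ 2 ≤ ⟪M f, f⟫)
    (C : H →L[ℝ] H) (hCsa : ∀ f g : H, ⟪C f, g⟫ = ⟪f, C g⟫)
    (hCpos : ∀ f : H, 0 ≤ ⟪C f, f⟫)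
    (hdom : ∀ f : H, Summable fun i => ((lam i)⁻¹ * ⟪C f, φ i⟫) ^ 2)
    (hinv : ∀ f : H, (∑' i : ℕ, ((lam i)⁻¹ * ⟪C f, φ i⟫) • φ i) + M (C f) = f) :
    (∀ f : H, ⟪f, C f⟫ ≤ ∑' i : ℕ, lam i * ⟪f, φ i⟫ ^ 2) ∧
    (∀ f : H, ‖C f‖ ≤ c⁻¹ * ‖f‖) ∧
    (∀ N : ℕ, (∑' i : ℕ, ⟪φ i, C (φ i)⟫) ≤ (N : ℝ) / c + ∑' i : ℕ, lam (N + i)) := by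
    classical
  set b : HilbertBasis ℕ ℝ H := HilbertBasis.mk hON (le_of_eq htot.symm) with hbdef
  have hbφ : ∀ i, b i = φ i := fun i => by
    rw [hbdef, HilbertBasis.coe_mk]
  -- Key identity: ⟪f, C f⟫ = Q f + ⟪M (C f), C f⟫, with Q f summable
  have key : ∀ f : H,
      (Summable fun i => (lam i)⁻¹ * ⟪C f, φ i⟫ ^ 2) ∧
      ⟪f, C f⟫ = (∑' i, (lam i)⁻¹ * ⟪C f, φ i⟫ ^ 2) + ⟪M (C f), C f⟫ := by
    intro f
    set a : ℕ → ℝ := fun i => (lam i)⁻¹ * ⟪C f, φ i⟫ with ha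
    have hmem : Memℓp a 2 := by
      apply memℓp_gen
      have h2 : (2 : ℝ≥0∞).toReal = ((2 : ℕ) : ℝ) := by simp
      rw [h2]
      simp_rw [Real.rpow_natCast]
      simpa [sq_abs] using hdom f
    have hHS : HasSum (fun i => a i • φ i) (b.repr.symm ⟨a, hmem⟩) := by
      simpa [hbφ] using b.hasSum_repr_symm ⟨a, hmem⟩
    have htsum : (∑' i, a i • φ i) = b.repr.symm ⟨a, hmem⟩ := hHS.tsum_eq
    have h2 : HasSum (fun i => a i * ⟪C f, φ i⟫) ⟪C f, (∑' i, a i • φ i)⟫ := by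
      rw [htsum]
      have := hHS.mapL (innerSL ℝ (C f))
      simpa [inner_smul_right] using this
    have hfun : (fun i => a i * ⟪C f, φ i⟫)
        = fun i => (lam i)⁻¹ * ⟪C f, φ i⟫ ^ 2 := by
      funext i; rw [ha]; ring
    rw [hfun] at h2
    refine ⟨h2.summable, ?_⟩
    have hfe : (∑' i, a i • φ i) + M (C f) = f := hinv f
    have h1 : ⟪f, C f⟫ = ⟪(∑' i, a i • φ i), C f⟫ + ⟪M (C f), C f⟫ := by
      rw [← inner_add_left, hfe]
    rw [h1, h2.tsum_eq]
    rw [real_inner_comm]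
  -- Part (a)
  have parta : ∀ f : H, ⟪f, C f⟫ ≤ ∑' i : ℕ, lam i * ⟪f, φ i⟫ ^ 2 := by
    intro f
    obtain ⟨hQsum, hkey⟩ := key f
    have hMpos : 0 ≤ ⟪M (C f), C f⟫ :=
      le_trans (mul_nonneg hc.le (sq_nonneg _)) (hcoer (C f))
    have hQ0 : 0 ≤ ∑' i, (lam i)⁻¹ * ⟪C f, φ i⟫ ^ 2 :=
      tsum_nonneg fun i => mul_nonneg (inv_nonneg.2 (hlam i).le) (sq_nonneg _)
    have hQleS : (∑' i, (lam i)⁻¹ * ⟪C f, φ i⟫ ^ 2) ≤ ⟪f, C f⟫ := by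
      rw [hkey]; linarith
    have hS0 : 0 ≤ ⟪f, C f⟫ := by rw [hkey]; linarith
    -- Parseval
    have hPar : HasSum (fun i => ⟪f, φ i⟫ * ⟪C f, φ i⟫) ⟪f, C f⟫ := by
      have h := b.hasSum_inner_mul_inner f (C f)
      have he : (fun i => ⟪f, b i⟫ * ⟪b i, C f⟫) = fun i => ⟪f, φ i⟫ * ⟪C f, φ i⟫ := by
        funext i; rw [hbφ i, real_inner_comm (φ i) (C f)]
      rwa [he] at h
    -- summability of the P-series
    have hPsum : Summable fun i => lam i * ⟪f, φ i⟫ ^ 2 := by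
      apply Summable.of_nonneg_of_le (fun i => mul_nonneg (hlam i).le (sq_nonneg _))
        (fun i => ?_) (hsum.mul_right (‖f‖ ^ 2))
      have h1 : |⟪f, φ i⟫| ≤ ‖f‖ := by
        have := abs_real_inner_le_norm f (φ i)
        rwa [hON.1 i, mul_one] at this
      have h2 : ⟪f, φ i⟫ ^ 2 ≤ ‖f‖ ^ 2 := by
        rw [← sq_abs]; exact pow_le_pow_left₀ (abs_nonneg _) h1 2
      exact mul_le_mul_of_nonneg_left h2 (hlam i).le
    have hP0 : 0 ≤ ∑' i, lam i * ⟪f, φ i⟫ ^ 2 :=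
      tsum_nonneg fun i => mul_nonneg (hlam i).le (sq_nonneg _)
    apply opt_aux hS0 hP0
    intro t ht
    have step : ⟪f, C f⟫ ≤ t / 2 * (∑' i, lam i * ⟪f, φ i⟫ ^ 2)
        + 1 / (2 * t) * (∑' i, (lam i)⁻¹ * ⟪C f, φ i⟫ ^ 2) := by
      rw [← hPar.tsum_eq, ← tsum_mul_left, ← tsum_mul_left,
        ← Summable.tsum_add (hPsum.mul_left _) (hQsum.mul_left _)]
      exact Summable.tsum_le_tsum (fun i => amgm_aux ht (hlam i)) hPar.summable
        ((hPsum.mul_left _).add (hQsum.mul_left _))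
    have h1t : (0:ℝ) ≤ 1 / (2 * t) := by positivity
    calc ⟪f, C f⟫ ≤ t / 2 * (∑' i, lam i * ⟪f, φ i⟫ ^ 2)
        + 1 / (2 * t) * (∑' i, (lam i)⁻¹ * ⟪C f, φ i⟫ ^ 2) := step
      _ ≤ t / 2 * (∑' i, lam i * ⟪f, φ i⟫ ^ 2) + 1 / (2 * t) * ⟪f, C f⟫ := by
          have := mul_le_mul_of_nonneg_left hQleS h1t
          linarith
  -- Part (b)
  have partb : ∀ f : H, ‖C f‖ ≤ c⁻¹ * ‖f‖ := by
    intro f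
    obtain ⟨hQsum, hkey⟩ := key f
    have hQ0 : 0 ≤ ∑' i, (lam i)⁻¹ * ⟪C f, φ i⟫ ^ 2 :=
      tsum_nonneg fun i => mul_nonneg (inv_nonneg.2 (hlam i).le) (sq_nonneg _)
    have hMS : ⟪M (C f), C f⟫ ≤ ⟪f, C f⟫ := by rw [hkey]; linarith
    have hCS : ⟪f, C f⟫ ≤ ‖f‖ * ‖C f‖ := real_inner_le_norm f (C f)
    have hkey2 : c * ‖C f‖ ^ 2 ≤ ‖f‖ * ‖C f‖ :=
      le_trans (hcoer (C f)) (le_trans hMS hCS)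
    rcases eq_or_lt_of_le (norm_nonneg (C f)) with h0 | h0
    · rw [← h0]; exact mul_nonneg (inv_nonneg.2 hc.le) (norm_nonneg f)
    · rw [le_inv_mul_iff₀ hc]
      have := (mul_le_mul_iff_of_pos_right h0).1 (by nlinarith : c * ‖C f‖ * ‖C f‖ ≤ ‖f‖ * ‖C f‖)
      linarith
  refine ⟨parta, partb, ?_⟩
  -- Part (c)
  intro N
  set d : ℕ → ℝ := fun i => ⟪φ i, C (φ i)⟫ with hd
  have hd0 : ∀ i, 0 ≤ d i := fun i => by
    rw [hd]; simpa [real_inner_comm] using hCpos (φ i)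
  have hdlam : ∀ i, d i ≤ lam i := by
    intro i
    have h1 := parta (φ i)
    have h2 : (∑' j, lam j * ⟪φ i, φ j⟫ ^ 2) = lam i := by
      have hfn : (fun j => lam j * ⟪φ i, φ j⟫ ^ 2) = fun j => if j = i then lam i else 0 := by
        funext j
        rw [orthonormal_iff_ite.mp hON i j]
        by_cases h : i = j
        · subst h; simp
        · simp [h, Ne.symm h]
      rw [hfn, tsum_ite_eq]
    rw [h2] at h1
    exact h1
  have hdc : ∀ i, d i ≤ c⁻¹ := by
    intro i
    have h1 : d i ≤ ‖φ i‖ * ‖C (φ i)‖ := real_inner_le_norm _ _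
    have h2 := partb (φ i)
    rw [hON.1 i, one_mul] at h1
    rw [hON.1 i, mul_one] at h2
    exact le_trans h1 h2
  have hdsum : Summable d := Summable.of_nonneg_of_le hd0 hdlam hsum
  have hA : ∑ i ∈ Finset.range N, d i ≤ (N : ℝ) / c := by
    calc ∑ i ∈ Finset.range N, d i ≤ ∑ _i ∈ Finset.range N, c⁻¹ :=
          Finset.sum_le_sum fun i _ => hdc i
      _ = (N : ℝ) * c⁻¹ := by simp [mul_comm]
      _ = (N : ℝ) / c := by rw [div_eq_mul_inv]
  have hsum' : Summable fun i => lam (N + i) :=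
    ((summable_nat_add_iff N).2 hsum).congr fun i => by rw [add_comm]
  have hpt : ∀ i, d (i + N) ≤ lam (N + i) := by
    intro i; rw [add_comm N i]; exact hdlam (i + N)
  have hB : (∑' i, d (i + N)) ≤ ∑' i, lam (N + i) :=
    Summable.tsum_le_tsum hpt ((summable_nat_add_iff N).2 hdsum) hsum'
  calc (∑' i, d i) = ∑ i ∈ Finset.range N, d i + ∑' i, d (i + N) :=
        (Summable.sum_add_tsum_nat_add N hdsum).symm
    _ ≤ (N : ℝ) / c + ∑' i, lam (N + i) := add_le_add hA hB
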